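/- arXiv:1804.07197 — 5 statements merged into one kernel-verified Lean document; each statement's English description precedes it below -/
import Mathlib

section
/- For every real-valued continuously differentiable function u on ℝ³ whose support is compact and contained in Ω, one has ∫_{ℝ³} |∂u/∂x₁(x₁,x₂,x₃)|² dx₁dx₂dx₃ ≥ ∫_{ℝ³} f(x₁)|u(x₁,x₂,x₃)|² dx₁dx₂dx₃. (Lemma 3.1 of the paper; this is the key Hardy-type estimate behind the main Berezin-type bound.) -/
/-!
For fixed `y = (x₂, x₃)` the slice `t ↦ u (t, y)` vanishes outside
`S = {t | R_{θ t} y ∈ ω}`, `R_α` the rotation by `α`. Since `R_{α + π} = -R_α` and `ω` lies in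
the half-plane `y₂ > 0`, no two points of `S` have angles differing by `π`. So on each component
`(a, b)` of `S ∩ (0, ∞)` the angle grows by at most `π`; as `θ₊⁻¹ (θ x - π) ≤ a` and `θ'` is
increasing, the mean value theorem gives `f ≤ (π / (b - a))²` on `(a, b)`, and the Wirtinger
inequality `(π / (b - a))² ∫ g² ≤ ∫ g'²` for `g` vanishing at `a` and `b` bounds that component.
Summing over components, reflecting `x₁ ↦ -x₁`, and integrating over `y` gives the estimate.
-/

open Real Set Filter MeasureTheory Topology

theorem mem_connectedComponentIn_of_mem_closure {X : Type*} [TopologicalSpace X] {S : Set X}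
    {x y : X} (hx : x ∈ S) (hy : y ∈ closure (connectedComponentIn S x)) (hyS : y ∈ S) :
    y ∈ connectedComponentIn S x :=
  (isPreconnected_connectedComponentIn.subset_closure (subset_insert y _)
      (insert_subset hy subset_closure)).subset_connectedComponentIn
    (mem_insert_of_mem y (mem_connectedComponentIn hx))
    (insert_subset hyS (connectedComponentIn_subset S x)) (mem_insert y _)

theorem IsOpen.connectedComponentIn_eq_Ioo {S : Set ℝ} (hS : IsOpen S) {l t r : ℝ}
    (ht : t ∈ S) (hl : l ∉ S) (hr : r ∉ S) (hlt : l < t) (htr : t < r) :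
    ∃ a b, l ≤ a ∧ a ∉ S ∧ b ∉ S ∧ connectedComponentIn S t = Ioo a b := by
  set C := connectedComponentIn S t
  have hCS : C ⊆ S := connectedComponentIn_subset S t
  have htC : t ∈ C := mem_connectedComponentIn ht
  have hCopen : IsOpen C := hS.connectedComponentIn
  have hCord : OrdConnected C := isPreconnected_connectedComponentIn.ordConnected
  have hlC : ∀ y ∈ C, l < y := fun y hy => not_le.1 fun hyl =>
    hl (hCS (hCord.out hy htC ⟨hyl, hlt.le⟩))
  have hrC : ∀ y ∈ C, y < r := fun y hy => not_le.1 fun hry =>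
    hr (hCS (hCord.out htC hy ⟨htr.le, hry⟩))
  have hbb : BddBelow C := ⟨l, fun y hy => (hlC y hy).le⟩
  have hba : BddAbove C := ⟨r, fun y hy => (hrC y hy).le⟩
  have haS : sInf C ∉ S := by
    intro haS
    have haC := mem_connectedComponentIn_of_mem_closure ht (csInf_mem_closure ⟨t, htC⟩ hbb) haS
    obtain ⟨y, hya, hyC⟩ := Filter.Eventually.exists_lt (hCopen.mem_nhds haC)
    exact (csInf_le hbb hyC).not_gt hya
  have hbS : sSup C ∉ S := by
    intro hbS
    have hbC := mem_connectedComponentIn_of_mem_closure ht (csSup_mem_closure ⟨t, htC⟩ hba) hbS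
    obtain ⟨y, hby, hyC⟩ := Filter.Eventually.exists_gt (hCopen.mem_nhds hbC)
    exact (le_csSup hba hyC).not_gt hby
  refine ⟨sInf C, sSup C, le_csInf ⟨t, htC⟩ fun y hy => (hlC y hy).le, haS, hbS, ?_⟩
  refine Subset.antisymm (fun y hy => ⟨?_, ?_⟩)
    ((isConnected_connectedComponentIn_iff.2 ht).Ioo_csInf_csSup_subset hbb hba)
  · exact (csInf_le hbb hy).lt_of_ne fun h => haS (h ▸ hCS hy)
  · exact (le_csSup hba hy).lt_of_ne fun h => hbS (h ▸ hCS hy)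

theorem setIntegral_le_setIntegral_of_connectedComponentIn {X : Type*} [TopologicalSpace X]
    [LocallyConnectedSpace X] [TopologicalSpace.SeparableSpace X] [MeasurableSpace X]
    [OpensMeasurableSpace X] {μ : Measure X} {U : Set X} (hU : IsOpen U) {φ ψ : X → ℝ}
    (hφ : IntegrableOn φ U μ) (hψ : IntegrableOn ψ U μ)
    (h : ∀ x ∈ U, ∫ t in connectedComponentIn U x, φ t ∂μ ≤
      ∫ t in connectedComponentIn U x, ψ t ∂μ) :
    ∫ t in U, φ t ∂μ ≤ ∫ t in U, ψ t ∂μ := by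
  set T := connectedComponentIn U '' U
  have hdisj : T.PairwiseDisjoint id := by
    rintro _ ⟨x, -, rfl⟩ _ ⟨y, -, rfl⟩ hne
    refine disjoint_left.2 fun z hzx hzy => hne ?_
    rw [connectedComponentIn_eq hzx, connectedComponentIn_eq hzy]
  have hopen : ∀ C ∈ T, IsOpen C := by
    rintro _ ⟨x, -, rfl⟩
    exact hU.connectedComponentIn
  have : Countable T := (hdisj.countable_of_isOpen hopen
    (by rintro _ ⟨x, hx, rfl⟩; exact ⟨x, mem_connectedComponentIn hx⟩)).to_subtype
  have hUT : U = ⋃ C : T, (C : Set X) := by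
    refine Subset.antisymm (fun x hx => mem_iUnion.2 ⟨⟨_, x, hx, rfl⟩, mem_connectedComponentIn hx⟩)
      (iUnion_subset ?_)
    rintro ⟨_, x, -, rfl⟩
    exact connectedComponentIn_subset U x
  have hmeas : ∀ C : T, MeasurableSet (C : Set X) := fun C => (hopen C C.2).measurableSet
  have hdisj' : Pairwise (Function.onFun Disjoint fun C : T => (C : Set X)) :=
    fun C D hCD => hdisj C.2 D.2 (Subtype.coe_injective.ne hCD)
  rw [hUT] at hφ hψ ⊢
  refine hasSum_le ?_ (hasSum_integral_iUnion hmeas hdisj' hφ)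
    (hasSum_integral_iUnion hmeas hdisj' hψ)
  rintro ⟨_, x, hx, rfl⟩
  exact h x hx

theorem tendsto_sq_div_of_hasDerivAt {g s : ℝ → ℝ} {g' s' x₀ : ℝ} (hg : HasDerivAt g g' x₀)
    (hs : HasDerivAt s s' x₀) (hg₀ : g x₀ = 0) (hs₀ : s x₀ = 0) (hs' : s' ≠ 0) :
    Tendsto (fun x => g x ^ 2 / s x) (𝓝[≠] x₀) (𝓝 0) := by
  have hslope : Tendsto (fun x => g x * (slope g x₀ x / slope s x₀ x)) (𝓝[≠] x₀)
      (𝓝 (0 * (g' / s'))) := by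
    refine Tendsto.mul ?_ ((hasDerivAt_iff_tendsto_slope.1 hg).div
      (hasDerivAt_iff_tendsto_slope.1 hs) hs')
    simpa [hg₀] using hg.continuousAt.tendsto.mono_left nhdsWithin_le_nhds
  rw [zero_mul] at hslope
  refine hslope.congr' (eventually_nhdsWithin_of_forall fun x hx => ?_)
  have hx : x - x₀ ≠ 0 := sub_ne_zero.2 hx
  simp only [slope_def_field, hg₀, hs₀, sub_zero]
  field_simp

theorem sq_mul_integral_sq_le_integral_deriv_sq {g : ℝ → ℝ} (hg : ContDiff ℝ 1 g) {a b : ℝ}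
    (hab : a < b) (ha : g a = 0) (hb : g b = 0) :
    (π / (b - a)) ^ 2 * ∫ x in a..b, g x ^ 2 ≤ ∫ x in a..b, deriv g x ^ 2 := by
  set c := π / (b - a)
  have hc : c * (b - a) = π := div_mul_cancel₀ π (sub_pos.2 hab).ne'
  have hgc := hg.continuous
  have hg'c := hg.continuous_deriv le_rfl
  have hphase : ∀ x, HasDerivAt (fun x => c * (x - a)) c x := fun x => by
    simpa using ((hasDerivAt_id x).sub_const a).const_mul c
  have hsin : ∀ x ∈ Ioo a b, sin (c * (x - a)) ≠ 0 := fun x hx => by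
    refine (sin_pos_of_pos_of_lt_pi ?_ ?_).ne'
    · exact mul_pos (by positivity) (sub_pos.2 hx.1)
    · rw [← hc]; exact mul_lt_mul_of_pos_left (by linarith [hx.2]) (by positivity)
  -- Ground state substitution for the eigenfunction `sin (c (x - a))`.
  set F : ℝ → ℝ := fun x => c * cos (c * (x - a)) * (g x ^ 2 / sin (c * (x - a)))
  have hderiv : ∀ x ∈ Ioo a b, HasDerivAt F (deriv g x ^ 2 - c ^ 2 * g x ^ 2 -
      (deriv g x - c * cos (c * (x - a)) / sin (c * (x - a)) * g x) ^ 2) x := by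
    intro x hx
    have hg2 := ((hg.differentiable one_ne_zero x).hasDerivAt).fun_pow 2
    refine ((((hphase x).cos).const_mul c).mul
      (hg2.div (hphase x).sin (hsin x hx))).congr_deriv ?_
    have := hsin x hx
    norm_num
    field_simp
    ring
  -- At `a` and `b` the denominator is `sin 0 = sin π = 0`, so `F` takes the junk value `0`,
  -- which is also its limit there.
  have hend : ∀ x₀ ∈ ({a, b} : Set ℝ),
      g x₀ = 0 ∧ sin (c * (x₀ - a)) = 0 ∧ cos (c * (x₀ - a)) ≠ 0 := by
    rintro x₀ (rfl | rfl)
    · simp [ha]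
    · simp [hc, hb]
  have hFend : ∀ x₀ ∈ ({a, b} : Set ℝ), F x₀ = 0 := fun x₀ hx₀ => by
    simp [F, (hend x₀ hx₀).2.1]
  have hFcont_end : ∀ x₀ ∈ ({a, b} : Set ℝ), ContinuousAt F x₀ := by
    intro x₀ hx₀
    obtain ⟨hg₀, hs₀, hc₀⟩ := hend x₀ hx₀
    rw [← continuousWithinAt_compl_self, ContinuousWithinAt, hFend x₀ hx₀,
      ← mul_zero (c * cos (c * (x₀ - a)))]
    exact ((by fun_prop : Continuous fun x => c * cos (c * (x - a))).continuousAt.tendsto.mono_left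
      nhdsWithin_le_nhds).mul (tendsto_sq_div_of_hasDerivAt
        (hg.differentiable one_ne_zero x₀).hasDerivAt (hphase x₀).sin hg₀ hs₀
        (mul_ne_zero hc₀ (by positivity)))
  have hFcont : ContinuousOn F (Icc a b) := by
    intro x hx
    by_cases hxab : x = a ∨ x = b
    · exact (hFcont_end x hxab).continuousWithinAt
    · obtain ⟨hxa, hxb⟩ := not_or.1 hxab
      exact (hderiv x ⟨hx.1.lt_of_ne' hxa, hx.2.lt_of_ne hxb⟩).continuousAt.continuousWithinAt
  have key := intervalIntegral.sub_le_integral_of_hasDeriv_right_of_le hab.le hFcont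
    (fun x hx => (hderiv x hx).hasDerivWithinAt) (φ := fun x => deriv g x ^ 2 - c ^ 2 * g x ^ 2)
    (by fun_prop : Continuous _).integrableOn_Icc fun x _ => sub_le_self _ (sq_nonneg _)
  rw [hFend a (by simp), hFend b (by simp), sub_zero,
    intervalIntegral.integral_sub ((by fun_prop : Continuous _).intervalIntegrable _ _)
      ((by fun_prop : Continuous _).intervalIntegrable _ _),
    intervalIntegral.integral_const_mul] at key
  linarith

def HalfTurnFree (θ : ℝ → ℝ) (S : Set ℝ) : Prop :=
  ∀ s ∈ S, ∀ t ∈ S, θ t ≠ θ s + π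

theorem HalfTurnFree.le_add_pi {θ : ℝ → ℝ} {S : Set ℝ} (hS : HalfTurnFree θ S)
    (hθ : Continuous θ) {a b : ℝ} (hab : a < b) (hsub : Ioo a b ⊆ S) : θ b ≤ θ a + π := by
  by_contra! h
  have hnear : ∀ᶠ s in 𝓝[>] a, s ∈ Ioo a b ∧ θ s + π < θ b :=
    Filter.Eventually.and (Ioo_mem_nhdsGT hab) <|
      ((hθ.tendsto a).add_const π).mono_left nhdsWithin_le_nhds |>.eventually (gt_mem_nhds h)
  obtain ⟨s, hs, hsb⟩ := hnear.exists
  obtain ⟨t, ht, hθt⟩ := intermediate_value_Ioo hs.2.le hθ.continuousOn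
    ⟨lt_add_of_pos_right _ pi_pos, hsb⟩
  exact hS s (hsub hs) t (hsub ⟨hs.1.trans ht.1, ht.2⟩) hθt

theorem HalfTurnFree.comp_neg {θ : ℝ → ℝ} {S : Set ℝ} (hS : HalfTurnFree θ S) :
    HalfTurnFree (fun x => θ (-x)) (Neg.neg ⁻¹' S) :=
  fun s hs t ht => hS (-s) hs (-t) ht

/-- The hypotheses on `θ`, on `θinv = θ₊⁻¹` and on the weight `f` that concern `x ≥ 0`. -/
structure RightHardyWeight (θ θ' θinv f : ℝ → ℝ) : Prop where
  hasDerivAt : ∀ x, HasDerivAt θ (θ' x) x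
  monotone_deriv : Monotone θ'
  deriv_nonneg : ∀ x, 0 ≤ x → 0 ≤ θ' x
  inv_spec : ∀ α, θ 0 ≤ α →
    0 ≤ θinv α ∧ θ (θinv α) = α ∧ ∀ z, 0 ≤ z → θ z = α → θinv α ≤ z
  eq_sq : ∀ x, θinv (θ 0 + 2 * π) ≤ x → f x = θ' (θinv (θ x - π)) ^ 2
  eq_zero : ∀ x, 0 < x → x < θinv (θ 0 + 2 * π) → f x = 0

namespace RightHardyWeight

variable {θ θ' θinv f g : ℝ → ℝ} {S : Set ℝ} {a b : ℝ}

theorem continuous (h : RightHardyWeight θ θ' θinv f) : Continuous θ :=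
  continuous_iff_continuousAt.2 fun x => (h.hasDerivAt x).continuousAt

theorem monotoneOn (h : RightHardyWeight θ θ' θinv f) : MonotoneOn θ (Ici 0) :=
  monotoneOn_of_hasDerivWithinAt_nonneg (convex_Ici 0) h.continuous.continuousOn
    (fun x _ => (h.hasDerivAt x).hasDerivWithinAt)
    (fun x hx => h.deriv_nonneg x (interior_subset hx))

theorem deriv_inv_mul_le_pi (h : RightHardyWeight θ θ' θinv f) (hS : HalfTurnFree θ S)
    (ha : 0 ≤ a) (hsub : Ioo a b ⊆ S) {x : ℝ} (hx : x ∈ Ioo a b) (hx₀ : θ 0 + π ≤ θ x) :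
    θ' (θinv (θ x - π)) * (b - a) ≤ π := by
  obtain ⟨hξ₀, hθξ, hξmin⟩ := h.inv_spec (θ x - π) (by linarith)
  have hab : a < b := hx.1.trans hx.2
  have hspan := hS.le_add_pi h.continuous hab hsub
  have hxb : θ x ≤ θ b := h.monotoneOn (ha.trans hx.1.le) (ha.trans hab.le) hx.2.le
  have hξa : θinv (θ x - π) ≤ a := by
    by_contra! haξ
    have hθaξ := h.monotoneOn ha hξ₀ haξ.le
    exact haξ.not_ge (hξmin a ha (by linarith))
  obtain ⟨c, hc, hθc⟩ := exists_hasDerivAt_eq_slope θ θ' hab h.continuous.continuousOn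
    fun x _ => h.hasDerivAt x
  calc θ' (θinv (θ x - π)) * (b - a) ≤ θ' c * (b - a) :=
        mul_le_mul_of_nonneg_right (h.monotone_deriv (hξa.trans hc.1.le)) (sub_nonneg.2 hab.le)
    _ = θ b - θ a := by rw [hθc]; field_simp [(sub_pos.2 hab).ne']
    _ ≤ π := by linarith

theorem weight_le (h : RightHardyWeight θ θ' θinv f) (hS : HalfTurnFree θ S)
    (ha : 0 ≤ a) (hsub : Ioo a b ⊆ S) {x : ℝ} (hx : x ∈ Ioo a b) : f x ≤ (π / (b - a)) ^ 2 := by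
  obtain ⟨hp₀, hθp, -⟩ := h.inv_spec (θ 0 + 2 * π) (by linarith [pi_pos])
  rcases lt_or_ge x (θinv (θ 0 + 2 * π)) with hxp | hxp
  · rw [h.eq_zero x (ha.trans_lt hx.1) hxp]
    positivity
  have hx₀ : θ 0 + π ≤ θ x := by
    linarith [pi_pos, h.monotoneOn hp₀ (hp₀.trans hxp) hxp]
  obtain ⟨hξ₀, -, -⟩ := h.inv_spec (θ x - π) (by linarith)
  rw [h.eq_sq x hxp]
  refine pow_le_pow_left₀ (h.deriv_nonneg _ hξ₀) ?_ 2
  rw [le_div_iff₀ (sub_pos.2 (hx.1.trans hx.2))]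
  exact h.deriv_inv_mul_le_pi hS ha hsub hx hx₀

theorem setIntegral_Ioo_le (h : RightHardyWeight θ θ' θinv f) (hS : HalfTurnFree θ S)
    (hg : ContDiff ℝ 1 g) (hfg : IntegrableOn (fun x => f x * g x ^ 2) (Ioo a b))
    (ha : 0 ≤ a) (hab : a < b) (hsub : Ioo a b ⊆ S) (hga : 0 < a → g a = 0) (hgb : g b = 0) :
    ∫ x in Ioo a b, f x * g x ^ 2 ≤ ∫ x in Ioo a b, deriv g x ^ 2 := by
  by_cases hfar : ∃ x ∈ Ioo a b, θinv (θ 0 + 2 * π) ≤ x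
  swap
  · push Not at hfar
    calc ∫ x in Ioo a b, f x * g x ^ 2 = 0 := setIntegral_eq_zero_of_forall_eq_zero fun x hx => by
          rw [h.eq_zero x (ha.trans_lt hx.1) (hfar x hx), zero_mul]
      _ ≤ ∫ x in Ioo a b, deriv g x ^ 2 :=
          setIntegral_nonneg measurableSet_Ioo fun _ _ => sq_nonneg _
  obtain ⟨x, hx, hxp⟩ := hfar
  obtain ⟨hp₀, hθp, -⟩ := h.inv_spec (θ 0 + 2 * π) (by linarith [pi_pos])
  -- The interval reaches `θinv (θ 0 + 2π)` but spans an angle of at most `π`.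
  have ha₀ : 0 < a := by
    refine ha.lt_of_ne fun ha₀ => ?_
    have hpx := h.monotoneOn hp₀ (hp₀.trans hxp) hxp
    have hxb := h.monotoneOn (hp₀.trans hxp) (ha.trans hab.le) hx.2.le
    have hspan := hS.le_add_pi h.continuous hab hsub
    subst ha₀
    linarith [pi_pos]
  have hIoo : ∀ φ : ℝ → ℝ, ∫ x in a..b, φ x = ∫ x in Ioo a b, φ x := fun φ => by
    rw [intervalIntegral.integral_of_le hab.le, integral_Ioc_eq_integral_Ioo]
  calc ∫ x in Ioo a b, f x * g x ^ 2 ≤ ∫ x in Ioo a b, (π / (b - a)) ^ 2 * g x ^ 2 :=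
        setIntegral_mono_on hfg
          (((hg.continuous.pow 2).const_mul _).integrableOn_Icc.mono_set Ioo_subset_Icc_self)
          measurableSet_Ioo fun x hx =>
            mul_le_mul_of_nonneg_right (h.weight_le hS ha hsub hx) (sq_nonneg _)
    _ = (π / (b - a)) ^ 2 * ∫ x in a..b, g x ^ 2 := by rw [integral_const_mul, hIoo]
    _ ≤ ∫ x in a..b, deriv g x ^ 2 := sq_mul_integral_sq_le_integral_deriv_sq hg hab (hga ha₀) hgb
    _ = ∫ x in Ioo a b, deriv g x ^ 2 := hIoo _

theorem setIntegral_Ioi_le (h : RightHardyWeight θ θ' θinv f) (hS : IsOpen S)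
    (hS' : HalfTurnFree θ S) (hg : ContDiff ℝ 1 g) (hgS : ∀ t ∉ S, g t = 0)
    (hfg : IntegrableOn (fun t => f t * g t ^ 2) (Ioi 0))
    (hg' : IntegrableOn (fun t => deriv g t ^ 2) (Ioi 0)) :
    ∫ t in Ioi 0, f t * g t ^ 2 ≤ ∫ t in Ioi 0, deriv g t ^ 2 := by
  have hU : IsOpen (S ∩ Ioi 0) := hS.inter isOpen_Ioi
  have hUI : S ∩ Ioi 0 ⊆ Ioi 0 := inter_subset_right
  calc ∫ t in Ioi 0, f t * g t ^ 2 = ∫ t in S ∩ Ioi 0, f t * g t ^ 2 :=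
        setIntegral_eq_of_subset_of_forall_sdiff_eq_zero measurableSet_Ioi hUI fun t ht => by
          rw [hgS t fun htS => ht.2 ⟨htS, ht.1⟩]; ring
    _ ≤ ∫ t in S ∩ Ioi 0, deriv g t ^ 2 :=
        setIntegral_le_setIntegral_of_connectedComponentIn hU (hfg.mono_set hUI) (hg'.mono_set hUI)
          ?_
    _ ≤ ∫ t in Ioi 0, deriv g t ^ 2 :=
        setIntegral_mono_set hg' (Eventually.of_forall fun _ => sq_nonneg _) hUI.eventuallyLE
  -- The component of `x` lies between `0` and the first point where `θ` has turned by `π`.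
  intro x hx
  have hx₀ : x ∈ Ici 0 := mem_Ici.2 (le_of_lt hx.2)
  obtain ⟨hr₀, hθr, -⟩ := h.inv_spec (θ x + π)
    (by linarith [pi_pos, h.monotoneOn self_mem_Ici hx₀ hx₀])
  have hxr : x < θinv (θ x + π) := not_le.1 fun hrx => by
    linarith [pi_pos, h.monotoneOn hr₀ hx₀ hrx]
  obtain ⟨a, b, ha, haU, hbU, hC⟩ := hU.connectedComponentIn_eq_Ioo hx
    (fun h₀ => lt_irrefl (0 : ℝ) h₀.2)
    (fun hr => hS' x hx.1 _ hr.1 hθr) hx.2 hxr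
  have hxab : x ∈ Ioo a b := hC ▸ mem_connectedComponentIn hx
  have hsub : Ioo a b ⊆ S ∩ Ioi 0 := hC ▸ connectedComponentIn_subset _ _
  rw [hC]
  exact h.setIntegral_Ioo_le hS' hg (hfg.mono_set (hsub.trans hUI)) ha (hxab.1.trans hxab.2)
    (hsub.trans inter_subset_left) (fun ha₀ => hgS a fun haS => haU ⟨haS, ha₀⟩)
    (hgS b fun hbS => hbU ⟨hbS, ha.trans_lt (hxab.1.trans hxab.2)⟩)

end RightHardyWeight

theorem RightHardyWeight.of_left {θ θ' θinv f : ℝ → ℝ} (hθ : ∀ x, HasDerivAt θ (θ' x) x)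
    (hmono : Monotone θ') (hneg : ∀ x, x ≤ 0 → θ' x ≤ 0)
    (hinv : ∀ α, θ 0 ≤ α → θinv α ≤ 0 ∧ θ (θinv α) = α ∧ ∀ z, z ≤ 0 → θ z = α → z ≤ θinv α)
    (hf : ∀ x, x ≤ θinv (θ 0 + 2 * π) → f x = θ' (θinv (θ x - π)) ^ 2)
    (hf₀ : ∀ x, θinv (θ 0 + 2 * π) < x → x < 0 → f x = 0) :
    RightHardyWeight (fun x => θ (-x)) (fun x => -θ' (-x)) (fun α => -θinv α)
      (fun x => f (-x)) where
  hasDerivAt x := by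
    have hcomp := (hθ (-x)).comp x (hasDerivAt_neg x)
    simp only [mul_neg, mul_one] at hcomp
    exact hcomp
  monotone_deriv x y hxy := neg_le_neg (hmono (neg_le_neg hxy))
  deriv_nonneg x hx := neg_nonneg.2 (hneg (-x) (neg_nonpos.2 hx))
  inv_spec α hα := by
    obtain ⟨h₀, hθ, hmax⟩ := hinv α (by simpa using hα)
    refine ⟨neg_nonneg.2 h₀, by simpa using hθ, fun z hz hθz => ?_⟩
    exact neg_le.1 (hmax (-z) (neg_nonpos.2 hz) hθz)
  eq_sq x hx := by
    simp only [neg_zero, neg_neg, neg_sq] at hx ⊢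
    exact hf (-x) (neg_le.1 hx)
  eq_zero x hx hxp := hf₀ (-x) (by simpa using lt_neg.1 hxp) (neg_lt_zero.2 hx)

theorem RightHardyWeight.integral_mul_sq_le {θ θ' θ'' θinv θinv' f g : ℝ → ℝ} {S : Set ℝ}
    (hR : RightHardyWeight θ θ' θinv f)
    (hL : RightHardyWeight (fun x => θ (-x)) θ'' θinv' (fun x => f (-x)))
    (hS : IsOpen S) (hS' : HalfTurnFree θ S) (hg : ContDiff ℝ 1 g) (hgS : ∀ t ∉ S, g t = 0)
    (hfg : Integrable fun t => f t * g t ^ 2) (hg' : Integrable fun t => deriv g t ^ 2) :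
    ∫ t, f t * g t ^ 2 ≤ ∫ t, deriv g t ^ 2 := by
  rw [← intervalIntegral.integral_Iic_add_Ioi hfg.integrableOn hfg.integrableOn,
    ← intervalIntegral.integral_Iic_add_Ioi hg'.integrableOn hg'.integrableOn]
  refine add_le_add ?_ (hR.setIntegral_Ioi_le hS hS' hg hgS hfg.integrableOn hg'.integrableOn)
  have hg'neg : (fun t => deriv (fun x => g (-x)) t ^ 2) = fun t => deriv g (-t) ^ 2 := by
    simp only [deriv_comp_neg, neg_sq]
  have hleft := hL.setIntegral_Ioi_le (g := fun x => g (-x)) (hS.preimage continuous_neg)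
    hS'.comp_neg (hg.comp contDiff_neg) (fun t ht => hgS (-t) ht) hfg.comp_neg.integrableOn
    (hg'neg ▸ hg'.comp_neg.integrableOn)
  rw [hg'neg] at hleft
  have hf := integral_comp_neg_Ioi 0 fun t => f t * g t ^ 2
  have hg'' := integral_comp_neg_Ioi 0 fun t => deriv g t ^ 2
  simp only [neg_zero] at hf hg''
  rwa [hf, hg''] at hleft

noncomputable def planeRotation (α : ℝ) (y : ℝ × ℝ) : ℝ × ℝ :=
  (y.1 * cos α - y.2 * sin α, y.1 * sin α + y.2 * cos α)

theorem planeRotation_add_pi (α : ℝ) (y : ℝ × ℝ) :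
    planeRotation (α + π) y = -planeRotation α y := by
  simp only [planeRotation, cos_add_pi, sin_add_pi, Prod.neg_mk]
  congr 1 <;> ring

theorem planeRotation_twist_cancel (α : ℝ) (q : ℝ × ℝ) :
    planeRotation α (q.1 * cos α + q.2 * sin α, q.2 * cos α - q.1 * sin α) = q := by
  simp only [planeRotation]
  ext
  · linear_combination q.1 * sin_sq_add_cos_sq α
  · linear_combination q.2 * sin_sq_add_cos_sq α

theorem isOpen_setOf_planeRotation_mem {ω : Set (ℝ × ℝ)} (hω : IsOpen ω) {θ : ℝ → ℝ}
    (hθ : Continuous θ) (y : ℝ × ℝ) : IsOpen {t | planeRotation (θ t) y ∈ ω} :=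
  hω.preimage (by unfold planeRotation; fun_prop)

theorem halfTurnFree_planeRotation {ω : Set (ℝ × ℝ)} (hω : ω ⊆ {y | 0 < y.1}) (θ : ℝ → ℝ)
    (y : ℝ × ℝ) : HalfTurnFree θ {t | planeRotation (θ t) y ∈ ω} := by
  intro s hs t ht hθt
  have h₁ := hω hs
  have h₂ := hω ht
  rw [mem_ofPred_eq, hθt, planeRotation_add_pi] at h₂
  simp only [mem_ofPred_eq, Prod.fst_neg] at h₁ h₂
  linarith

theorem deriv_fst_eq_fderiv {E F : Type*} [NormedAddCommGroup E] [NormedSpace ℝ E]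
    [NormedAddCommGroup F] [NormedSpace ℝ F] {u : ℝ × E → F} {x : ℝ} {y : E}
    (hu : DifferentiableAt ℝ u (x, y)) : deriv (fun t => u (t, y)) x = fderiv ℝ u (x, y) (1, 0) :=
  (hu.hasFDerivAt.comp_hasDerivAt x ((hasDerivAt_id x).prodMk (hasDerivAt_const x y))).deriv

theorem integrable_deriv_fst_sq {E : Type*} [NormedAddCommGroup E] [NormedSpace ℝ E]
    [MeasurableSpace (ℝ × E)] [OpensMeasurableSpace (ℝ × E)] {μ : Measure (ℝ × E)}
    [IsFiniteMeasureOnCompacts μ] {u : ℝ × E → ℝ} (hu : ContDiff ℝ 1 u)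
    (hus : HasCompactSupport u) : Integrable (fun p => deriv (fun t => u (t, p.2)) p.1 ^ 2) μ := by
  have : (fun p => deriv (fun t => u (t, p.2)) p.1 ^ 2) = fun p => fderiv ℝ u p (1, 0) ^ 2 :=
    funext fun p => by rw [deriv_fst_eq_fderiv (hu.differentiable one_ne_zero _)]
  rw [this]
  have hcont : Continuous fun p => fderiv ℝ u p (1, 0) ^ 2 :=
    ((hu.continuous_fderiv one_ne_zero).clm_apply continuous_const).pow 2
  have hsupp : HasCompactSupport fun p => fderiv ℝ u p (1, 0) ^ 2 :=
    (hus.fderiv ℝ).comp_left (g := fun L : (ℝ × E) →L[ℝ] ℝ => L (1, 0) ^ 2) (by simp)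
  exact hcont.integrable_of_hasCompactSupport hsupp

theorem hardy_type_estimate_general
    (ω : Set (ℝ × ℝ))
    (hω_open : IsOpen ω)
    (hω_half : ω ⊆ {y : ℝ × ℝ | 0 < y.1})
    (θ θ' : ℝ → ℝ)
    (hθ : ∀ x, HasDerivAt θ (θ' x) x)
    (hmono : Monotone θ')
    (hpos : ∀ x, 0 ≤ x → 0 ≤ θ' x) (hneg : ∀ x, x ≤ 0 → θ' x ≤ 0)
    (Ω : Set (ℝ × ℝ × ℝ))
    (hΩ : Ω = (fun q : ℝ × ℝ × ℝ =>
      (q.1, q.2.1 * Real.cos (θ q.1) + q.2.2 * Real.sin (θ q.1),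
       q.2.2 * Real.cos (θ q.1) - q.2.1 * Real.sin (θ q.1))) '' (Set.univ ×ˢ ω))
    (θinvp θinvm : ℝ → ℝ)
    (hinvp : ∀ α, θ 0 ≤ α →
      0 ≤ θinvp α ∧ θ (θinvp α) = α ∧ ∀ z, 0 ≤ z → θ z = α → θinvp α ≤ z)
    (hinvm : ∀ α, θ 0 ≤ α →
      θinvm α ≤ 0 ∧ θ (θinvm α) = α ∧ ∀ z, z ≤ 0 → θ z = α → z ≤ θinvm α)
    (f : ℝ → ℝ)
    (hf₁ : ∀ x, θinvp (θ 0 + 2 * π) ≤ x → f x = (θ' (θinvp (θ x - π))) ^ 2)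
    (hf₂ : ∀ x, x ≤ θinvm (θ 0 + 2 * π) → f x = (θ' (θinvm (θ x - π))) ^ 2)
    (hf₃ : ∀ x, θinvm (θ 0 + 2 * π) < x → x < θinvp (θ 0 + 2 * π) → f x = 0)
    (u : ℝ × ℝ × ℝ → ℝ)
    (hu : ContDiff ℝ 1 u)
    (husupp : HasCompactSupport u)
    (huΩ : tsupport u ⊆ Ω) :
    ∫ p : ℝ × ℝ × ℝ, f p.1 * (u p) ^ 2 ≤
      ∫ p : ℝ × ℝ × ℝ, (deriv (fun t => u (t, p.2)) p.1) ^ 2 := by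
  have h2π : θ 0 ≤ θ 0 + 2 * π := by linarith [pi_pos]
  have hR : RightHardyWeight θ θ' θinvp f :=
    ⟨hθ, hmono, hpos, hinvp, hf₁, fun x hx hxp => hf₃ x ((hinvm _ h2π).1.trans_lt hx) hxp⟩
  have hL := RightHardyWeight.of_left hθ hmono hneg hinvm hf₂
    fun x hxm hx => hf₃ x hxm (hx.trans_le (hinvp _ h2π).1)
  have hvanish : ∀ p, planeRotation (θ p.1) p.2 ∉ ω → u p = 0 := by
    intro p hp
    refine image_eq_zero_of_notMem_tsupport fun hpu => hp ?_
    obtain ⟨q, ⟨-, hq⟩, rfl⟩ := hΩ ▸ huΩ hpu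
    simpa only [planeRotation_twist_cancel] using hq
  -- A non-integrable left-hand side has Bochner integral `0`.
  by_cases hint : Integrable fun p : ℝ × ℝ × ℝ => f p.1 * u p ^ 2
  swap
  · rw [integral_undef hint]
    exact integral_nonneg fun p => sq_nonneg _
  have hG : Integrable fun p : ℝ × ℝ × ℝ => deriv (fun t => u (t, p.2)) p.1 ^ 2 :=
    integrable_deriv_fst_sq hu husupp
  rw [Measure.volume_eq_prod] at hint hG ⊢
  rw [integral_prod_symm _ hint, integral_prod_symm _ hG]
  refine integral_mono_ae hint.integral_prod_right hG.integral_prod_right ?_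
  filter_upwards [hint.prod_left_ae, hG.prod_left_ae] with y hfy hgy
  exact hR.integral_mul_sq_le hL (isOpen_setOf_planeRotation_mem hω_open hR.continuous y)
    (halfTurnFree_planeRotation hω_half θ y) (hu.comp (contDiff_id.prodMk contDiff_const))
    (fun t ht => hvanish (t, y) ht) hfy hgy

/-- Lemma 3.1: for the twisted tube `Ω = 𝔏(ℝ × ω)` with cross-section `ω` in the open
half-plane `{y₂ > 0}` and rotation angle `θ` with monotonically increasing derivative `θ'`
(nonnegative on `ℝ₊`, nonpositive on `ℝ₋`, `|θ'| → ∞` at infinity), every continuously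
differentiable `u : ℝ³ → ℝ` with compact support contained in `Ω` satisfies
`∫_{ℝ³} |∂u/∂x₁|² ≥ ∫_{ℝ³} f(x₁)|u|²`, where `f` is defined via the generalized inverses
`θ₊⁻¹`, `θ₋⁻¹` of `θ`. -/
theorem hardy_type_estimate
    (ω : Set (ℝ × ℝ)) (hω_ne : ω.Nonempty) (hω_bdd : Bornology.IsBounded ω)
    (hω_open : IsOpen ω) (hω_conn : IsConnected ω)
    (hω_half : ω ⊆ {y : ℝ × ℝ | 0 < y.1})
    (θ θ' : ℝ → ℝ)
    (hθ : ∀ x, HasDerivAt θ (θ' x) x) (hθ'c : Continuous θ')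
    (hmono : Monotone θ')
    (hpos : ∀ x, 0 ≤ x → 0 ≤ θ' x) (hneg : ∀ x, x ≤ 0 → θ' x ≤ 0)
    (hinf : Tendsto (fun x => |θ' x|) (cocompact ℝ) atTop)
    (Ω : Set (ℝ × ℝ × ℝ))
    (hΩ : Ω = (fun q : ℝ × ℝ × ℝ =>
      (q.1, q.2.1 * Real.cos (θ q.1) + q.2.2 * Real.sin (θ q.1),
       q.2.2 * Real.cos (θ q.1) - q.2.1 * Real.sin (θ q.1))) '' (Set.univ ×ˢ ω))
    (θinvp θinvm : ℝ → ℝ)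
    (hinvp : ∀ α, θ 0 ≤ α →
      0 ≤ θinvp α ∧ θ (θinvp α) = α ∧ ∀ z, 0 ≤ z → θ z = α → θinvp α ≤ z)
    (hinvm : ∀ α, θ 0 ≤ α →
      θinvm α ≤ 0 ∧ θ (θinvm α) = α ∧ ∀ z, z ≤ 0 → θ z = α → z ≤ θinvm α)
    (f : ℝ → ℝ)
    (hf₁ : ∀ x, θinvp (θ 0 + 2 * π) ≤ x → f x = (θ' (θinvp (θ x - π))) ^ 2)
    (hf₂ : ∀ x, x ≤ θinvm (θ 0 + 2 * π) → f x = (θ' (θinvm (θ x - π))) ^ 2)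
    (hf₃ : ∀ x, θinvm (θ 0 + 2 * π) < x → x < θinvp (θ 0 + 2 * π) → f x = 0)
    (u : ℝ × ℝ × ℝ → ℝ)
    (hu : ContDiff ℝ 1 u)
    (husupp : HasCompactSupport u)
    (huΩ : tsupport u ⊆ Ω) :
    ∫ p : ℝ × ℝ × ℝ, f p.1 * (u p) ^ 2 ≤
      ∫ p : ℝ × ℝ × ℝ, (deriv (fun t => u (t, p.2)) p.1) ^ 2 :=
  hardy_type_estimate_general ω hω_open hω_half θ θ' hθ hmono hpos hneg Ω hΩ θinvp θinvm hinvp hinvm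
    f hf₁ hf₂ hf₃ u hu husupp huΩ
end

section
/- Fix (x₂,x₃) ∈ ℝ² and set ω_x := {t ∈ ℝ : (t,x₂,x₃) ∈ Ω}. Then for every real-valued continuously differentiable function g on ℝ with compact support which vanishes at every point of ℝ \ ω_x, one has ∫_ℝ g'(t)² dt ≥ ∫_{θ₊⁻¹(θ(0)+2π)}^{∞} (θ'(θ₊⁻¹(θ(t) − π)))² g(t)² dt. (This is the one-dimensional slice estimate, inequality (final+) in the proof of Lemma 3.1.) -/
/-!
Where `g ≠ 0` the point `(t, x₂, x₃)` lies in `Ω`, so `x₂ cos θ(t) - x₃ sin θ(t) > 0`. This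
expression changes sign under `θ ↦ θ + π`, hence `θ` increases by at most `π` across each nodal
interval `(a, b)` of `g`. If such an interval meets `(θ₊⁻¹(θ(0) + 2π), ∞)`, this forces `a ≥ 0`;
then `θ₊⁻¹(θ(t) - π) ≤ a` for `t ∈ (a, b)`, and monotonicity of `θ'` with the mean value theorem
gives `θ'(θ₊⁻¹(θ(t) - π)) ≤ θ'(a) ≤ (θ(b) - θ(a)) / (b - a) ≤ π / (b - a)`. Wirtinger's
inequality `(π / (b - a))² ∫_a^b g² ≤ ∫_a^b g'²` on each of the countably many disjoint nodal
intervals, summed, gives the estimate.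
-/

open Real Set Filter MeasureTheory Function

lemma continuousAt_sq_div_sin {g : ℝ → ℝ} {x₀ c : ℝ} (hg : DifferentiableAt ℝ g x₀)
    (hg0 : g x₀ = 0) (hc : c ≠ 0) :
    ContinuousAt (fun t => g t ^ 2 / sin (c * (t - x₀))) x₀ := by
  have hderiv : HasDerivAt (fun t => g t ^ 2) 0 x₀ := by
    simpa [hg0] using hg.hasDerivAt.fun_pow 2
  have hdslope : ContinuousAt (dslope (fun t => g t ^ 2) x₀) x₀ :=
    continuousAt_dslope_same.2 hderiv.differentiableAt
  have hsinc : ContinuousAt (fun t => c * sinc (c * (t - x₀))) x₀ := by fun_prop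
  convert hdslope.div hsinc (by simp [hc]) using 1
  funext t
  rcases eq_or_ne t x₀ with rfl | ht
  · simp [hg0, hderiv.deriv]
  · have hu : c * (t - x₀) ≠ 0 := mul_ne_zero hc (sub_ne_zero.2 ht)
    have ht' : t - x₀ ≠ 0 := sub_ne_zero.2 ht
    simp only [Pi.div_apply]
    rw [dslope_of_ne _ ht, slope_def_field, sinc_of_ne_zero hu, hg0]
    field_simp
    simp

theorem wirtinger_inequality {g : ℝ → ℝ} (hg : ContDiff ℝ 1 g) {a b : ℝ} (hab : a < b)
    (hga : g a = 0) (hgb : g b = 0) :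
    (π / (b - a)) ^ 2 * ∫ t in a..b, g t ^ 2 ≤ ∫ t in a..b, deriv g t ^ 2 := by
  set c := π / (b - a)
  have hc : 0 < c := div_pos pi_pos (sub_pos.2 hab)
  have hsin_eq_neg : ∀ t, sin (c * (t - a)) = -sin (c * (t - b)) := by
    intro t
    rw [← sin_add_pi]
    congr 1
    simp only [c]
    field_simp [(sub_pos.2 hab).ne']
    ring
  have hgd : Differentiable ℝ g := hg.differentiable one_ne_zero
  have hg'c : Continuous (deriv g) := hg.continuous_deriv le_rfl
  have hsin : ∀ t ∈ Ioo a b, 0 < sin (c * (t - a)) := by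
    intro t ht
    apply sin_pos_of_pos_of_lt_pi (mul_pos hc (sub_pos.2 ht.1))
    calc c * (t - a) < c * (b - a) := by gcongr; exact ht.2
      _ = π := div_mul_cancel₀ _ (sub_pos.2 hab).ne'
  set ψ : ℝ → ℝ := fun t => c * cos (c * (t - a)) / sin (c * (t - a))
  -- Picone's identity for the ground state `sin (c * (t - a))`; `F` vanishes at `a` and `b`
  -- because there `sin = 0` and `x / 0 = 0`
  set F : ℝ → ℝ := fun t => c * cos (c * (t - a)) * (g t ^ 2 / sin (c * (t - a)))
  have hF : ∀ t ∈ Ioo a b, HasDerivAt F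
      (deriv g t ^ 2 - c ^ 2 * g t ^ 2 - (deriv g t - ψ t * g t) ^ 2) t := by
    intro t ht
    have hs := (hsin t ht).ne'
    have hu : HasDerivAt (fun t => c * (t - a)) c t := by
      simpa using ((hasDerivAt_id t).sub_const a).const_mul c
    have := (hu.cos.const_mul c).fun_mul ((hgd t).hasDerivAt.fun_pow 2 |>.fun_div hu.sin hs)
    refine this.congr_deriv ?_
    simp only [ψ, Nat.cast_ofNat]
    field_simp
    ring
  have hFa : F a = 0 := by simp [F]
  have hFb : F b = 0 := by simp [F, c, div_mul_cancel₀ _ (sub_pos.2 hab).ne']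
  have hFc : ContinuousOn F (Icc a b) := by
    refine fun t ht => ContinuousAt.continuousWithinAt (.mul (by fun_prop) ?_)
    rcases ht.1.eq_or_lt with rfl | hat
    · exact continuousAt_sq_div_sin (hgd _) hga hc.ne'
    rcases ht.2.eq_or_lt with rfl | htb
    · simp_rw [hsin_eq_neg, div_neg]
      exact (continuousAt_sq_div_sin (hgd _) hgb hc.ne').neg
    · have hgc := hg.continuous
      exact ContinuousAt.div (by fun_prop) (by fun_prop) (hsin t ⟨hat, htb⟩).ne'
  have key := intervalIntegral.sub_le_integral_of_hasDeriv_right_of_le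
    (φ := fun t => deriv g t ^ 2 - c ^ 2 * g t ^ 2) hab.le hFc
    (fun t ht => (hF t ht).hasDerivWithinAt)
    (((hg'c.pow 2).sub (continuous_const.mul (hg.continuous.pow 2))).integrableOn_Icc)
    (fun t _ => sub_le_self _ (sq_nonneg _))
  rw [hFa, hFb, sub_zero, intervalIntegral.integral_sub, intervalIntegral.integral_const_mul] at key
  · linarith
  · exact (hg'c.pow 2).intervalIntegrable _ _
  · exact (continuous_const.mul (hg.continuous.pow 2)).intervalIntegrable _ _

structure IsNodalInterval (g : ℝ → ℝ) (a b : ℝ) : Prop where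
  lt : a < b
  left : g a = 0
  right : g b = 0
  ne_zero : ∀ t ∈ Ioo a b, g t ≠ 0

theorem exists_isNodalInterval_mem {g : ℝ → ℝ} (hg : Continuous g) (hgs : HasCompactSupport g)
    {t : ℝ} (ht : g t ≠ 0) : ∃ a b, t ∈ Ioo a b ∧ IsNodalInterval g a b := by
  have hZ : IsClosed (g ⁻¹' {0}) := isClosed_singleton.preimage hg
  obtain ⟨m, hm⟩ := hgs.isCompact.bddBelow
  obtain ⟨M, hM⟩ := hgs.isCompact.bddAbove
  have hzero : ∀ s, s < m ∨ M < s → g s = 0 := fun s hs =>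
    image_eq_zero_of_notMem_tsupport fun h => by rcases hs with hs | hs <;> linarith [hm h, hM h]
  set L := g ⁻¹' {0} ∩ Iic t
  set R := g ⁻¹' {0} ∩ Ici t
  have hL : sSup L ∈ L := (hZ.inter isClosed_Iic).csSup_mem
    ⟨min t (m - 1), hzero _ (.inl (by linarith [min_le_right t (m - 1)])),
      mem_Iic.2 (min_le_left _ _)⟩
    (bddAbove_Iic.mono inter_subset_right)
  have hR : sInf R ∈ R := (hZ.inter isClosed_Ici).csInf_mem
    ⟨max t (M + 1), hzero _ (.inr (by linarith [le_max_right t (M + 1)])),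
      mem_Ici.2 (le_max_left _ _)⟩
    (bddBelow_Ici.mono inter_subset_right)
  have hLt : sSup L < t := lt_of_le_of_ne hL.2 fun h => ht (h ▸ hL.1)
  have htR : t < sInf R := lt_of_le_of_ne' hR.2 fun h => ht (h ▸ hR.1)
  refine ⟨sSup L, sInf R, ⟨hLt, htR⟩, hLt.trans htR, hL.1, hR.1, fun s hs hgs => ?_⟩
  rcases le_total s t with hst | hts
  · exact (le_csSup (bddAbove_Iic.mono inter_subset_right) (show s ∈ L from ⟨hgs, hst⟩)).not_gt hs.1
  · exact (csInf_le (bddBelow_Ici.mono inter_subset_right) (show s ∈ R from ⟨hgs, hts⟩)).not_gt hs.2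

theorem IsNodalInterval.eq_of_mem {g : ℝ → ℝ} {a b a' b' t : ℝ} (h : IsNodalInterval g a b)
    (h' : IsNodalInterval g a' b') (ht : t ∈ Ioo a b) (ht' : t ∈ Ioo a' b') : a = a' ∧ b = b' := by
  have hle : ∀ {a b a' b'}, IsNodalInterval g a b → IsNodalInterval g a' b' → t ∈ Ioo a b →
      t ∈ Ioo a' b' → a ≤ a' ∧ b ≤ b' := fun h h' ht ht' =>
    ⟨not_lt.1 fun hlt => h'.ne_zero _ ⟨hlt, ht.1.trans ht'.2⟩ h.left,
     not_lt.1 fun hlt => h.ne_zero _ ⟨ht.1.trans ht'.2, hlt⟩ h'.right⟩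
  obtain ⟨ha, hb⟩ := hle h h' ht ht'
  obtain ⟨ha', hb'⟩ := hle h' h ht' ht
  exact ⟨ha.antisymm ha', hb.antisymm hb'⟩

theorem integral_le_of_isNodalInterval {g f₁ f₂ : ℝ → ℝ} (hg : Continuous g)
    (hgs : HasCompactSupport g) (hf₁ : ∀ t, g t = 0 → f₁ t = 0) (hf₂ : Integrable f₂)
    (hf₂0 : 0 ≤ f₂)
    (hle : ∀ a b, IsNodalInterval g a b → ∫ t in Ioo a b, f₁ t ≤ ∫ t in Ioo a b, f₂ t) :
    ∫ t, f₁ t ≤ ∫ t, f₂ t := by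
  by_cases hf₁i : Integrable f₁
  swap
  · rw [integral_undef hf₁i]
    exact integral_nonneg hf₂0
  set E := {p : ℝ × ℝ | IsNodalInterval g p.1 p.2}
  set I : E → Set ℝ := fun p => Ioo p.1.1 p.1.2
  have hdisj : Pairwise (Disjoint on I) := by
    intro p q hpq
    refine Set.disjoint_left.2 fun t htp htq => hpq ?_
    obtain ⟨h1, h2⟩ := p.2.eq_of_mem q.2 htp htq
    exact Subtype.ext (Prod.ext h1 h2)
  have : Countable E :=
    hdisj.countable_of_isOpen_disjoint (fun _ => isOpen_Ioo) fun p => nonempty_Ioo.2 p.2.lt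
  have hf₁V : ∫ t in ⋃ p, I p, f₁ t = ∫ t, f₁ t := by
    refine setIntegral_eq_integral_of_forall_compl_eq_zero fun t ht => hf₁ t ?_
    by_contra hgt
    obtain ⟨a, b, htab, hab⟩ := exists_isNodalInterval_mem hg hgs hgt
    exact ht (mem_iUnion.2 ⟨⟨(a, b), hab⟩, htab⟩)
  have hsum₁ := hasSum_integral_iUnion (fun _ => measurableSet_Ioo) hdisj hf₁i.integrableOn
  have hsum₂ := hasSum_integral_iUnion (fun _ => measurableSet_Ioo) hdisj hf₂.integrableOn
  calc ∫ t, f₁ t = ∫ t in ⋃ p, I p, f₁ t := hf₁V.symm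
    _ ≤ ∫ t in ⋃ p, I p, f₂ t := hasSum_le (fun p => hle _ _ p.2) hsum₁ hsum₂
    _ ≤ ∫ t, f₂ t := setIntegral_le_integral hf₂ (.of_forall hf₂0)

theorem setIntegral_mul_sq_le_integral_deriv_sq {g w : ℝ → ℝ} {S : Set ℝ} (hS : MeasurableSet S)
    (hg : ContDiff ℝ 1 g) (hgs : HasCompactSupport g) (hw : ∀ t ∈ S, 0 ≤ w t)
    (hwb : ∀ a b, IsNodalInterval g a b → ∀ t ∈ Ioo a b ∩ S, w t ≤ (π / (b - a)) ^ 2) :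
    ∫ t in S, w t * g t ^ 2 ≤ ∫ t, deriv g t ^ 2 := by
  have hsq : ∀ {f : ℝ → ℝ}, HasCompactSupport f → HasCompactSupport fun t => f t ^ 2 :=
    fun hf => hf.comp_left (g := fun x : ℝ => x ^ 2) (zero_pow two_ne_zero)
  have hg2 : Integrable fun t => g t ^ 2 :=
    (hg.continuous.pow 2).integrable_of_hasCompactSupport (hsq hgs)
  rw [← integral_indicator hS]
  refine integral_le_of_isNodalInterval hg.continuous hgs (fun t ht => by simp [ht])
    ((hg.continuous_deriv le_rfl |>.pow 2).integrable_of_hasCompactSupport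
      (hsq hgs.deriv)) (fun t => sq_nonneg _) fun a b hab => ?_
  have hwirt := wirtinger_inequality hg hab.lt hab.left hab.right
  rw [intervalIntegral.integral_of_le hab.lt.le, intervalIntegral.integral_of_le hab.lt.le,
    integral_Ioc_eq_integral_Ioo, integral_Ioc_eq_integral_Ioo] at hwirt
  calc ∫ t in Ioo a b, S.indicator (fun t => w t * g t ^ 2) t
      ≤ ∫ t in Ioo a b, (π / (b - a)) ^ 2 * g t ^ 2 := by
        refine integral_mono_of_nonneg (.of_forall fun t => ?_) (hg2.const_mul _).integrableOn
          ((ae_restrict_mem measurableSet_Ioo).mono fun t ht => ?_)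
        · by_cases htS : t ∈ S
          · simpa [htS] using mul_nonneg (hw t htS) (sq_nonneg (g t))
          · simp [htS]
        · by_cases htS : t ∈ S
          · simpa [htS] using mul_le_mul_of_nonneg_right (hwb a b hab t ⟨ht, htS⟩) (sq_nonneg (g t))
          · simp [htS]; positivity
    _ = (π / (b - a)) ^ 2 * ∫ t in Ioo a b, g t ^ 2 := integral_const_mul _ _
    _ ≤ ∫ t in Ioo a b, deriv g t ^ 2 := hwirt

theorem sub_le_pi_of_forall_pos {x y p q : ℝ} (h : ∀ s ∈ Ioo x y, 0 < p * cos s - q * sin s) :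
    y - x ≤ π := by
  by_contra! hlt
  -- the expression changes sign under `s ↦ s + π`
  have h₁ := h ((x + y - π) / 2) ⟨by linarith, by linarith [pi_pos]⟩
  have h₂ := h ((x + y - π) / 2 + π) ⟨by linarith [pi_pos], by linarith⟩
  rw [cos_add_pi, sin_add_pi] at h₂
  linarith

theorem sub_le_pi_of_forall_pos_comp {f : ℝ → ℝ} {x y p q : ℝ} (hxy : x ≤ y)
    (hf : ContinuousOn f (Icc x y)) (h : ∀ s ∈ Ioo x y, 0 < p * cos (f s) - q * sin (f s)) :
    f y - f x ≤ π :=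
  sub_le_pi_of_forall_pos fun _ hσ => by
    obtain ⟨s, hs, rfl⟩ := intermediate_value_Ioo hxy hf hσ
    exact h s hs

theorem pos_of_mem_image_rotation {ω : Set (ℝ × ℝ)} (hω : ω ⊆ {y | 0 < y.1}) {θ : ℝ → ℝ}
    {t x₂ x₃ : ℝ}
    (h : (t, x₂, x₃) ∈ (fun q : ℝ × ℝ × ℝ =>
      (q.1, q.2.1 * cos (θ q.1) + q.2.2 * sin (θ q.1),
       q.2.2 * cos (θ q.1) - q.2.1 * sin (θ q.1))) '' (univ ×ˢ ω)) :
    0 < x₂ * cos (θ t) - x₃ * sin (θ t) := by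
  obtain ⟨⟨t', y₂, y₃⟩, ⟨-, hy⟩, heq⟩ := h
  simp only [Prod.mk.injEq] at heq
  obtain ⟨rfl, rfl, rfl⟩ := heq
  have hy₂ : 0 < y₂ := hω hy
  linear_combination hy₂ - y₂ * sin_sq_add_cos_sq (θ t')

section

variable {θ θ' : ℝ → ℝ} (hθ : ∀ x, HasDerivAt θ (θ' x) x)
include hθ

theorem monotoneOn_Ici_of_hasDerivAt (hpos : ∀ x, 0 ≤ x → 0 ≤ θ' x) : MonotoneOn θ (Ici 0) :=
  monotoneOn_of_hasDerivWithinAt_nonneg (convex_Ici 0)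
    (fun x _ => (hθ x).continuousAt.continuousWithinAt) (fun x _ => (hθ x).hasDerivWithinAt)
    fun x hx => hpos x (interior_subset hx)

theorem mul_sub_le_sub_of_monotone_deriv (hmono : Monotone θ') {a b : ℝ} (hab : a ≤ b) :
    θ' a * (b - a) ≤ θ b - θ a :=
  (convex_Ici a).mul_sub_le_image_sub_of_le_deriv
    (fun x _ => (hθ x).continuousAt.continuousWithinAt)
    (fun x _ => (hθ x).differentiableAt.differentiableWithinAt)
    (fun x hx => (hθ x).deriv ▸ hmono (interior_subset hx)) a (mem_Ici.2 le_rfl) b hab hab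

theorem deriv_le_pi_div_of_le (hmono : Monotone θ') (hpos : ∀ x, 0 ≤ x → 0 ≤ θ' x)
    {a b u s : ℝ} (ha : 0 ≤ a) (hab : a < b) (hu : u ∈ Icc a b) (hspan : θ b - θ a ≤ π)
    (hu₀ : θ 0 ≤ θ u - π) (hs : ∀ z, 0 ≤ z → θ z = θ u - π → s ≤ z) :
    θ' s ≤ π / (b - a) := by
  have hub : θ u ≤ θ b :=
    monotoneOn_Ici_of_hasDerivAt hθ hpos (ha.trans hu.1) (ha.trans hab.le) hu.2
  obtain ⟨z, hz, hzu⟩ := intermediate_value_Icc ha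
    (fun x _ => (hθ x).continuousAt.continuousWithinAt) ⟨hu₀, by linarith⟩
  calc θ' s ≤ θ' a := hmono ((hs z hz.1 hzu).trans hz.2)
    _ ≤ π / (b - a) := by
      rw [le_div_iff₀ (sub_pos.2 hab)]
      linarith [mul_sub_le_sub_of_monotone_deriv hθ hmono hab.le]

end

theorem slice_estimate_plus_general
    (ω : Set (ℝ × ℝ))
    (hω_half : ω ⊆ {y : ℝ × ℝ | 0 < y.1})
    (θ θ' : ℝ → ℝ)
    (hθ : ∀ x, HasDerivAt θ (θ' x) x)
    (hmono : Monotone θ')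
    (hpos : ∀ x, 0 ≤ x → 0 ≤ θ' x)
    (Ω : Set (ℝ × ℝ × ℝ))
    (hΩ : Ω = (fun q : ℝ × ℝ × ℝ =>
      (q.1, q.2.1 * Real.cos (θ q.1) + q.2.2 * Real.sin (θ q.1),
       q.2.2 * Real.cos (θ q.1) - q.2.1 * Real.sin (θ q.1))) '' (Set.univ ×ˢ ω))
    (θinvp : ℝ → ℝ)
    (hinvp : ∀ α, θ 0 ≤ α →
      0 ≤ θinvp α ∧ θ (θinvp α) = α ∧ ∀ z, 0 ≤ z → θ z = α → θinvp α ≤ z)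
    (x₂ x₃ : ℝ)
    (g : ℝ → ℝ) (hg : ContDiff ℝ 1 g) (hgsupp : HasCompactSupport g)
    (hgvanish : ∀ t : ℝ, (t, x₂, x₃) ∉ Ω → g t = 0) :
    ∫ t in Set.Ioi (θinvp (θ 0 + 2 * π)),
        (θ' (θinvp (θ t - π))) ^ 2 * (g t) ^ 2 ≤
      ∫ t : ℝ, (deriv g t) ^ 2 := by
  subst hΩ
  have hθc : Continuous θ := continuous_iff_continuousAt.2 fun x => (hθ x).continuousAt
  have hθmono := monotoneOn_Ici_of_hasDerivAt hθ hpos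
  set T := θinvp (θ 0 + 2 * π)
  obtain ⟨hT0, hθT, -⟩ := hinvp (θ 0 + 2 * π) (by linarith [pi_pos])
  have hspan : ∀ a b, IsNodalInterval g a b → ∀ x y, a ≤ x → x ≤ y → y ≤ b →
      θ y - θ x ≤ π := fun a b hab x y hax hxy hyb =>
    sub_le_pi_of_forall_pos_comp hxy hθc.continuousOn fun s hs =>
      pos_of_mem_image_rotation hω_half <| not_not.1 <|
        mt (hgvanish s) (hab.ne_zero s ⟨hax.trans_lt hs.1, hs.2.trans_le hyb⟩)
  refine setIntegral_mul_sq_le_integral_deriv_sq measurableSet_Ioi hg hgsupp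
    (fun _ _ => sq_nonneg _) fun a b hab t ⟨htab, hTt⟩ => ?_
  have hθt : θ 0 + 2 * π ≤ θ t := hθT ▸ hθmono hT0 (hT0.trans hTt.le) hTt.le
  -- a nodal interval reaching beyond `T` cannot contain `[0, t]`, on which `θ` gains `2π`
  have ha : 0 ≤ a := by
    by_contra! ha
    linarith [hspan a b hab 0 t ha.le (hT0.trans hTt.le) htab.2.le, pi_pos]
  obtain ⟨hs0, -, hsmin⟩ := hinvp (θ t - π) (by linarith [pi_pos])
  have hspan_ab := hspan a b hab a b le_rfl hab.lt.le le_rfl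
  exact pow_le_pow_left₀ (hpos _ hs0) (deriv_le_pi_div_of_le hθ hmono hpos ha hab.lt
    ⟨htab.1.le, htab.2.le⟩ hspan_ab (by linarith [pi_pos]) hsmin) 2

/-- The one-dimensional slice estimate (final+) in the proof of Lemma 3.1: for a fixed point
`(x₂,x₃)` of the plane and any continuously differentiable compactly supported `g : ℝ → ℝ`
vanishing outside the slice `ω_x = {t : (t,x₂,x₃) ∈ Ω}`, one has
`∫_ℝ g'(t)² dt ≥ ∫_{θ₊⁻¹(θ(0)+2π)}^∞ (θ'(θ₊⁻¹(θ(t) − π)))² g(t)² dt`. -/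
theorem slice_estimate_plus
    (ω : Set (ℝ × ℝ)) (hω_ne : ω.Nonempty) (hω_bdd : Bornology.IsBounded ω)
    (hω_open : IsOpen ω) (hω_conn : IsConnected ω)
    (hω_half : ω ⊆ {y : ℝ × ℝ | 0 < y.1})
    (θ θ' : ℝ → ℝ)
    (hθ : ∀ x, HasDerivAt θ (θ' x) x) (hθ'c : Continuous θ')
    (hmono : Monotone θ')
    (hpos : ∀ x, 0 ≤ x → 0 ≤ θ' x) (hneg : ∀ x, x ≤ 0 → θ' x ≤ 0)
    (hinf : Tendsto (fun x => |θ' x|) (cocompact ℝ) atTop)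
    (Ω : Set (ℝ × ℝ × ℝ))
    (hΩ : Ω = (fun q : ℝ × ℝ × ℝ =>
      (q.1, q.2.1 * Real.cos (θ q.1) + q.2.2 * Real.sin (θ q.1),
       q.2.2 * Real.cos (θ q.1) - q.2.1 * Real.sin (θ q.1))) '' (Set.univ ×ˢ ω))
    (θinvp : ℝ → ℝ)
    (hinvp : ∀ α, θ 0 ≤ α →
      0 ≤ θinvp α ∧ θ (θinvp α) = α ∧ ∀ z, 0 ≤ z → θ z = α → θinvp α ≤ z)
    (x₂ x₃ : ℝ)
    (g : ℝ → ℝ) (hg : ContDiff ℝ 1 g) (hgsupp : HasCompactSupport g)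
    (hgvanish : ∀ t : ℝ, (t, x₂, x₃) ∉ Ω → g t = 0) :
    ∫ t in Set.Ioi (θinvp (θ 0 + 2 * π)),
        (θ' (θinvp (θ t - π))) ^ 2 * (g t) ^ 2 ≤
      ∫ t : ℝ, (deriv g t) ^ 2 :=
  slice_estimate_plus_general ω hω_half θ θ' hθ hmono hpos Ω hΩ θinvp hinvp x₂ x₃ g hg hgsupp
    hgvanish
end

section
/- Let (x₂,x₃) ∈ ℝ² with (x₂,x₃) ≠ (0,0), let a < b be real numbers, and let θ : ℝ → ℝ be continuous. If x₂ cos θ(t) − x₃ sin θ(t) > 0 for every t ∈ (a,b), then |θ(b) − θ(a)| ≤ π. (This is the key geometric observation (relation): on the way along a connected component of a slice of a tube whose cross-section lies in the half-plane {y₂>0}, the rotation angle changes by at most π.) -/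
open Real Set

/-! Writing `(x₂, x₃) = r (cos φ, sin φ)`, the hypothesis says `r cos (θ t + φ) > 0`, so the continuous
angle `θ + φ` maps `(a, b)` onto an interval avoiding the zeros of `cos`, which are `π` apart. Such an
interval has length less than `π`, and by continuity the endpoint values of `θ + φ` lie in its closure. -/

theorem exists_mem_Icc_cos_eq_zero {x y : ℝ} (h : x + π ≤ y) : ∃ z ∈ Icc x y, cos z = 0 := by
  set k := ⌈(x - π / 2) / π⌉
  refine ⟨(2 * k + 1) * π / 2, ⟨?_, ?_⟩, cos_eq_zero_iff.2 ⟨k, rfl⟩⟩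
  · have := (div_le_iff₀ pi_pos).1 (Int.le_ceil ((x - π / 2) / π))
    linarith
  · have : (k : ℝ) - 1 < (x - π / 2) / π := by linarith [Int.ceil_lt_add_one ((x - π / 2) / π)]
    linarith [(lt_div_iff₀ pi_pos).1 this]

theorem IsPreconnected.abs_sub_lt_pi_of_cos_ne_zero {S : Set ℝ} (hS : IsPreconnected S)
    (hcos : ∀ z ∈ S, cos z ≠ 0) {u v : ℝ} (hu : u ∈ S) (hv : v ∈ S) : |v - u| < π := by
  have sub_lt : ∀ u ∈ S, ∀ v ∈ S, v - u < π := fun u hu v hv ↦ by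
    by_contra! h
    obtain ⟨z, hz, hz0⟩ := exists_mem_Icc_cos_eq_zero (by linarith : u + π ≤ v)
    exact hcos z (hS.Icc_subset hu hv hz) hz0
  exact abs_sub_lt_iff.2 ⟨sub_lt u hu v hv, sub_lt v hv u hu⟩

theorem abs_sub_le_pi_of_cos_ne_zero {g : ℝ → ℝ} {a b : ℝ} (hab : a < b)
    (hg : ContinuousOn g (Icc a b)) (hcos : ∀ t ∈ Ioo a b, cos (g t) ≠ 0) :
    |g b - g a| ≤ π := by
  have hS : IsPreconnected (g '' Ioo a b) :=
    isPreconnected_Ioo.image g (hg.mono Ioo_subset_Icc_self)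
  have hcl : ∀ t ∈ Icc a b, g t ∈ closure (g '' Ioo a b) := fun t ht ↦ by
    rw [← closure_Ioo hab.ne] at hg ht
    exact hg.image_closure (mem_image_of_mem g ht)
  have := map_mem_closure₂ (f := fun u v ↦ |v - u|) (u := Iic π) (by fun_prop)
    (hcl a (left_mem_Icc.2 hab.le)) (hcl b (right_mem_Icc.2 hab.le)) ?_
  · simpa [closure_Iic] using this
  rintro _ ⟨s, hs, rfl⟩ _ ⟨t, ht, rfl⟩
  exact (hS.abs_sub_lt_pi_of_cos_ne_zero (forall_mem_image.2 hcos)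
    (mem_image_of_mem g hs) (mem_image_of_mem g ht)).le

theorem mul_cos_sub_mul_sin_eq_norm_mul_cos_add_arg (x₂ x₃ θ : ℝ) :
    x₂ * cos θ - x₃ * sin θ = ‖(⟨x₂, x₃⟩ : ℂ)‖ * cos (θ + Complex.arg ⟨x₂, x₃⟩) := by
  rw [cos_add]
  linear_combination -cos θ * Complex.norm_mul_cos_arg ⟨x₂, x₃⟩ +
    sin θ * Complex.norm_mul_sin_arg ⟨x₂, x₃⟩

theorem angle_variation_le_pi_general (x₂ x₃ : ℝ)
    (a b : ℝ) (hab : a < b) (θ : ℝ → ℝ) (hθ : Continuous θ)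
    (hpos : ∀ t ∈ Set.Ioo a b, 0 < x₂ * Real.cos (θ t) - x₃ * Real.sin (θ t)) :
    |θ b - θ a| ≤ π := by
  set φ := Complex.arg ⟨x₂, x₃⟩
  have hcos : ∀ t ∈ Ioo a b, cos (θ t + φ) ≠ 0 := fun t ht ↦ by
    have := hpos t ht
    rw [mul_cos_sub_mul_sin_eq_norm_mul_cos_add_arg] at this
    exact (pos_of_mul_pos_right this (norm_nonneg _)).ne'
  simpa using abs_sub_le_pi_of_cos_ne_zero (g := fun t ↦ θ t + φ) hab (by fun_prop) hcos

/-- If a nonzero point `(x₂,x₃)` rotated by the angle `−θ(t)` lies in the open half-plane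
`{y₂ > 0}` for every `t` in the open interval `(a,b)` (with `θ` continuous), then the rotation
angle varies along `[a,b]` by at most `π`: `|θ(b) − θ(a)| ≤ π`. -/
theorem angle_variation_le_pi (x₂ x₃ : ℝ) (h : (x₂, x₃) ≠ (0, 0))
    (a b : ℝ) (hab : a < b) (θ : ℝ → ℝ) (hθ : Continuous θ)
    (hpos : ∀ t ∈ Set.Ioo a b, 0 < x₂ * Real.cos (θ t) - x₃ * Real.sin (θ t)) :
    |θ b - θ a| ≤ π :=
  angle_variation_le_pi_general x₂ x₃ a b hab θ hθ hpos
end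

section
/- Let θ : ℝ → ℝ be continuously differentiable, let ε > 0 and σ ≥ 0. Then Λ^{σ+3/2} / ∫_ℝ (ε θ'(x₁)² − Λ)₋^{σ+3/2} dx₁ → 0 as Λ → +∞; equivalently, Λ^{σ+3/2} = o(∫_ℝ (ε θ'(x₁)² − Λ)₋^{σ+3/2} dx₁) as Λ → ∞. (Relation (o) in the proof of Proposition 4.1.) -/
open Real Set Filter MeasureTheory

/-- Relation (o) from the proof of Proposition 4.1: for `θ` continuously differentiable,
`ε > 0` and `σ ≥ 0`, one has `Λ^{σ+3/2} = o(∫_ℝ (ε θ'(x₁)² − Λ)₋^{σ+3/2} dx₁)` as `Λ → ∞`,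
i.e. the ratio tends to `0`. -/
theorem lambda_pow_little_o (θ : ℝ → ℝ) (hθ : ContDiff ℝ 1 θ)
    (ε σ : ℝ) (hε : 0 < ε) (hσ : 0 ≤ σ) :
    Tendsto (fun Λ : ℝ =>
        ENNReal.ofReal (Λ ^ (σ + 3 / 2 : ℝ)) /
          ∫⁻ x : ℝ, ENNReal.ofReal ((max (-(ε * (deriv θ x) ^ 2 - Λ)) 0) ^ (σ + 3 / 2 : ℝ)))
      atTop (nhds 0) := by
  set p : ℝ := σ + 3 / 2 with hp
  have hp0 : 0 < p := by positivity
  rw [ENNReal.tendsto_nhds_zero]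
  intro δ hδ
  -- choose δ' ≤ δ, finite and positive
  set δ' : ENNReal := min δ 1 with hδ'
  have hδ'0 : δ' ≠ 0 := (lt_min hδ zero_lt_one).ne'
  have hδ't : δ' ≠ ⊤ := by simp [hδ']
  have hδ'pos : 0 < δ'.toReal := ENNReal.toReal_pos hδ'0 hδ't
  -- choose R
  set R : ℝ := (2 : ℝ) ^ p / δ'.toReal + 1 with hR
  have hRpos : 0 < R := by positivity
  -- bound on θ' on [-R, R]
  have hcont : Continuous (deriv θ) := hθ.continuous_deriv le_rfl
  obtain ⟨C, hC⟩ := (isCompact_Icc (a := -R) (b := R)).exists_bound_of_continuousOn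
    hcont.continuousOn
  have hC0 : 0 ≤ C := le_trans (norm_nonneg _) (hC 0 ⟨by linarith, hRpos.le⟩)
  filter_upwards [eventually_ge_atTop (2 * ε * C ^ 2 + 1)] with Λ hΛ
  have hΛpos : 0 < Λ := by nlinarith
  -- lower bound on integrand on Icc
  have key : ∀ x ∈ Icc (-R) R,
      ENNReal.ofReal ((Λ / 2) ^ p) ≤
        ENNReal.ofReal ((max (-(ε * (deriv θ x) ^ 2 - Λ)) 0) ^ p) := by
    intro x hx
    apply ENNReal.ofReal_le_ofReal
    apply Real.rpow_le_rpow (by positivity) _ hp0.le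
    have h1 : |deriv θ x| ≤ C := by simpa [Real.norm_eq_abs] using hC x hx
    have h2 : (deriv θ x) ^ 2 ≤ C ^ 2 := by
      nlinarith [abs_nonneg (deriv θ x), sq_abs (deriv θ x)]
    have h3 : ε * (deriv θ x) ^ 2 ≤ ε * C ^ 2 := by nlinarith
    have : Λ / 2 ≤ -(ε * (deriv θ x) ^ 2 - Λ) := by nlinarith
    exact this.trans (le_max_left _ _)
  -- integral lower bound
  have hIge : ENNReal.ofReal ((Λ / 2) ^ p) * ENNReal.ofReal (2 * R) ≤
      ∫⁻ x : ℝ, ENNReal.ofReal ((max (-(ε * (deriv θ x) ^ 2 - Λ)) 0) ^ p) := by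
    calc ENNReal.ofReal ((Λ / 2) ^ p) * ENNReal.ofReal (2 * R)
        = ∫⁻ _ in Icc (-R) R, ENNReal.ofReal ((Λ / 2) ^ p) := by
          rw [setLIntegral_const, Real.volume_Icc]
          ring_nf
      _ ≤ ∫⁻ x in Icc (-R) R,
            ENNReal.ofReal ((max (-(ε * (deriv θ x) ^ 2 - Λ)) 0) ^ p) :=
          setLIntegral_mono' measurableSet_Icc key
      _ ≤ _ := setLIntegral_le_lintegral _ _
  calc ENNReal.ofReal (Λ ^ p) /
        ∫⁻ x : ℝ, ENNReal.ofReal ((max (-(ε * (deriv θ x) ^ 2 - Λ)) 0) ^ p)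
      ≤ ENNReal.ofReal (Λ ^ p) /
          (ENNReal.ofReal ((Λ / 2) ^ p) * ENNReal.ofReal (2 * R)) :=
        ENNReal.div_le_div_left hIge _
    _ = ENNReal.ofReal ((2:ℝ) ^ p) / ENNReal.ofReal (2 * R) := by
        have hnum : Λ ^ p = (Λ / 2) ^ p * 2 ^ p := by
          rw [← Real.mul_rpow (by positivity) (by norm_num)]
          ring_nf
        rw [hnum, ENNReal.ofReal_mul (by positivity),
          ENNReal.mul_div_mul_left _ _ (by simp [ENNReal.ofReal_eq_zero]; positivity)
            ENNReal.ofReal_ne_top]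
    _ ≤ δ' := by
        rw [← ENNReal.ofReal_div_of_pos (by positivity)]
        have : (2:ℝ) ^ p / (2 * R) ≤ δ'.toReal := by
          rw [hR, div_le_iff₀ (by positivity)]
          have h2p : (0:ℝ) < (2:ℝ)^p := by positivity
          have heq : δ'.toReal * (2 * ((2:ℝ)^p/δ'.toReal + 1))
              = 2*(2:ℝ)^p + 2*δ'.toReal := by field_simp
          rw [heq]; nlinarith
        calc ENNReal.ofReal ((2:ℝ) ^ p / (2 * R)) ≤ ENNReal.ofReal δ'.toReal :=
              ENNReal.ofReal_le_ofReal this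
          _ = δ' := ENNReal.ofReal_toReal hδ't
    _ ≤ δ := min_le_left _ _
end

section
/- Let θ : ℝ → ℝ be continuously differentiable with |θ'(x₁)| ≥ |x₁| for all x₁ ∈ ℝ, let ε > 0, σ ≥ 0, and Λ > 0. Then ∫_ℝ (ε θ'(x₁)² − Λ)₋^{σ+3/2} dx₁ ≤ 2 ε^{−1/2} Λ^{σ+2}. (The integral estimate behind the improved Berezin comparison (berezin comparison) in Section 4.3.) -/
open Real Set Filter MeasureTheory

/-! Where `|x| > √(Λ/ε)` we have `ε θ'(x)² ≥ ε x² > Λ`, so the integrand vanishes; elsewhere it is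
at most `Λ^{σ+3/2}`. The integral is therefore at most `2 √(Λ/ε) Λ^{σ+3/2} = 2 ε^{-1/2} Λ^{σ+2}`. -/

theorem integral_le_mul_of_le_on_Icc {f : ℝ → ℝ} {a b C : ℝ} (hab : a ≤ b)
    (hf₀ : ∀ x, 0 ≤ f x) (hle : ∀ x ∈ Icc a b, f x ≤ C) (hzero : ∀ x ∉ Icc a b, f x = 0) :
    ∫ x, f x ≤ (b - a) * C := by
  have hbound : ∀ x, f x ≤ (Icc a b).indicator (fun _ ↦ C) x := fun x ↦ by
    by_cases hx : x ∈ Icc a b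
    · simpa [indicator_of_mem hx] using hle x hx
    · simp [indicator_of_notMem hx, hzero x hx]
  have hint : Integrable ((Icc a b).indicator fun _ ↦ C) :=
    (integrable_indicator_iff measurableSet_Icc).2 (integrableOn_const measure_Icc_lt_top.ne)
  calc ∫ x, f x ≤ ∫ x, (Icc a b).indicator (fun _ ↦ C) x :=
        integral_mono_of_nonneg (.of_forall hf₀) hint (.of_forall hbound)
    _ = (b - a) * C := by
      rw [integral_indicator measurableSet_Icc, setIntegral_const, measureReal_def,
        volume_Icc, ENNReal.toReal_ofReal (sub_nonneg.2 hab), smul_eq_mul]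

theorem lt_mul_sq_of_sqrt_div_lt_abs {ε Λ x : ℝ} (hε : 0 < ε) (hx : √(Λ / ε) < |x|) :
    Λ < ε * x ^ 2 := by
  have : Λ / ε < x ^ 2 := by
    by_contra! h
    exact hx.not_ge (abs_le_sqrt h)
  rwa [div_lt_iff₀' hε] at this

section NegPart

variable {ε Λ t p : ℝ}

theorem max_neg_sub_mul_sq_le (hε : 0 ≤ ε) (hΛ : 0 ≤ Λ) : max (-(ε * t ^ 2 - Λ)) 0 ≤ Λ :=
  max_le (by nlinarith [sq_nonneg t]) hΛ

theorem max_neg_sub_mul_sq_rpow_le (hε : 0 ≤ ε) (hΛ : 0 ≤ Λ) (hp : 0 ≤ p) :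
    max (-(ε * t ^ 2 - Λ)) 0 ^ p ≤ Λ ^ p :=
  rpow_le_rpow (le_max_right _ _) (max_neg_sub_mul_sq_le hε hΛ) hp

theorem max_neg_sub_mul_sq_rpow_eq_zero (h : Λ ≤ ε * t ^ 2) (hp : p ≠ 0) :
    max (-(ε * t ^ 2 - Λ)) 0 ^ p = 0 := by
  rw [max_eq_right (by linarith), zero_rpow hp]

end NegPart

theorem two_mul_sqrt_div_mul_rpow {ε Λ : ℝ} (hε : 0 ≤ ε) (hΛ : 0 < Λ) (s : ℝ) :
    2 * √(Λ / ε) * Λ ^ (s - 1 / 2) = 2 * ε ^ (-(1 / 2) : ℝ) * Λ ^ s := by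
  rw [sqrt_eq_rpow, div_rpow hΛ.le hε, rpow_neg hε, div_eq_mul_inv,
    show Λ ^ s = Λ ^ (s - 1 / 2) * Λ ^ (1 / 2 : ℝ) by rw [← rpow_add hΛ]; ring_nf]
  ring

theorem integral_le_berezin_general (θ : ℝ → ℝ)
    (hgrow : ∀ x : ℝ, |x| ≤ |deriv θ x|)
    (ε σ Λ : ℝ) (hε : 0 < ε) (hσ : 0 ≤ σ) (hΛ : 0 < Λ) :
    ∫ x : ℝ, (max (-(ε * (deriv θ x) ^ 2 - Λ)) 0) ^ (σ + 3 / 2 : ℝ) ≤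
      2 * ε ^ (-(1 / 2) : ℝ) * Λ ^ (σ + 2 : ℝ) := by
  set R := √(Λ / ε)
  have hp : 0 < σ + 3 / 2 := by linarith
  have hzero : ∀ x ∉ Icc (-R) R,
      max (-(ε * (deriv θ x) ^ 2 - Λ)) 0 ^ (σ + 3 / 2 : ℝ) = 0 := fun x hx ↦ by
    have hRx : R < |x| := lt_of_not_ge fun h ↦ hx (abs_le.1 h)
    refine max_neg_sub_mul_sq_rpow_eq_zero ?_ hp.ne'
    calc Λ ≤ ε * x ^ 2 := (lt_mul_sq_of_sqrt_div_lt_abs hε hRx).le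
      _ ≤ ε * deriv θ x ^ 2 := mul_le_mul_of_nonneg_left (sq_le_sq.2 (hgrow x)) hε.le
  calc _ ≤ (R - -R) * Λ ^ (σ + 3 / 2 : ℝ) :=
        integral_le_mul_of_le_on_Icc (by simp [R]) (fun _ ↦ rpow_nonneg (le_max_right _ _) _)
          (fun _ _ ↦ max_neg_sub_mul_sq_rpow_le hε.le hΛ.le hp.le) hzero
    _ = 2 * R * Λ ^ ((σ + 2) - 1 / 2 : ℝ) := by ring_nf
    _ = _ := two_mul_sqrt_div_mul_rpow hε.le hΛ _

/-- The integral estimate behind (berezin comparison) in Section 4.3: if `θ` is continuously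
differentiable with `|θ'(x₁)| ≥ |x₁|` for all `x₁`, then for `ε > 0`, `σ ≥ 0` and `Λ > 0`,
`∫_ℝ (ε θ'(x₁)² − Λ)₋^{σ+3/2} dx₁ ≤ 2 ε^{−1/2} Λ^{σ+2}`. -/
theorem integral_le_berezin (θ : ℝ → ℝ) (hθ : ContDiff ℝ 1 θ)
    (hgrow : ∀ x : ℝ, |x| ≤ |deriv θ x|)
    (ε σ Λ : ℝ) (hε : 0 < ε) (hσ : 0 ≤ σ) (hΛ : 0 < Λ) :
    ∫ x : ℝ, (max (-(ε * (deriv θ x) ^ 2 - Λ)) 0) ^ (σ + 3 / 2 : ℝ) ≤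
      2 * ε ^ (-(1 / 2) : ℝ) * Λ ^ (σ + 2 : ℝ) :=
  integral_le_berezin_general θ hgrow ε σ Λ hε hσ hΛ
end
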